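/- Let D ≥ 1 be an integer, E = ℂ^D, and let R_B ⊂ E^{⊗3} be the linear span of {[[x,y]_⊗, z]_⊗ : x, y, z ∈ E}. Then the subspace (R_B⊗E) ∩ (E⊗R_B) of E^{⊗4} has dimension D²(D²−1)/12. -/

import Mathlib

/-! The relation space `R_B` is the image of `Θ = (1 - cycle)(1 - swap)` on `E^{⊗3}`, so
`R_B ⊗ E` and `E ⊗ R_B` are the images of `A = Θ ⊗ 1` and `B = 1 ⊗ Θ`, with `A² = 3A` and
`B² = 3B`. The Young symmetrizer of shape `(2,2)`, divided by its hook-length product `12`, is an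
element `Π` of the group algebra of `S₄` that factors through both `A` and `B`, while `1 - Π` lies
in the left ideal generated by `3 - A` and `3 - B`. Hence `Π` is a projection onto
`(R_B ⊗ E) ∩ (E ⊗ R_B)`, whose dimension is the trace of `Π`. A permutation of the factors of
`E^{⊗4}` has trace `D ^ (number of cycles)`, and summing over the sixteen terms of `Π` gives
`(D⁴ - D²) / 12`. -/

set_option maxSynthPendingDepth 5

open TensorProduct

/-- The relation space `R_B ⊂ (ℂ^D)^{⊗3}` of the parafermionic algebra: the linear span of the
elements `[[x,y]_⊗, z]_⊗ = x⊗y⊗z - y⊗x⊗z - z⊗x⊗y + z⊗y⊗x` for `x, y, z ∈ ℂ^D`. -/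
noncomputable def parafermionicRelations (D : ℕ) :
    Submodule ℂ ((Fin D → ℂ) ⊗[ℂ] ((Fin D → ℂ) ⊗[ℂ] (Fin D → ℂ))) :=
  Submodule.span ℂ
    {t | ∃ x y z : Fin D → ℂ,
      t = x ⊗ₜ[ℂ] (y ⊗ₜ[ℂ] z) - y ⊗ₜ[ℂ] (x ⊗ₜ[ℂ] z)
          - z ⊗ₜ[ℂ] (x ⊗ₜ[ℂ] y) + z ⊗ₜ[ℂ] (y ⊗ₜ[ℂ] x)}

section Embeddings

variable (E : Type*) [AddCommGroup E] [Module ℂ E]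

/-- Reassociation `E^{⊗3} ⊗ E ≃ E^{⊗4}`. -/
noncomputable def assocFour :
    ((E ⊗[ℂ] (E ⊗[ℂ] E)) ⊗[ℂ] E) ≃ₗ[ℂ] E ⊗[ℂ] (E ⊗[ℂ] (E ⊗[ℂ] E)) :=
  (TensorProduct.assoc ℂ E (E ⊗[ℂ] E) E).trans
    (TensorProduct.congr (LinearEquiv.refl ℂ E) (TensorProduct.assoc ℂ E E E))

variable {E}

/-- The subspace `R ⊗ E` of `E^{⊗4}` determined by a subspace `R ⊆ E^{⊗3}`. -/
noncomputable def subRE (R : Submodule ℂ (E ⊗[ℂ] (E ⊗[ℂ] E))) :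
    Submodule ℂ (E ⊗[ℂ] (E ⊗[ℂ] (E ⊗[ℂ] E))) :=
  Submodule.map (assocFour E).toLinearMap
    (LinearMap.range (TensorProduct.map R.subtype (LinearMap.id (M := E))))

/-- The subspace `E ⊗ R` of `E^{⊗4}` determined by a subspace `R ⊆ E^{⊗3}`. -/
noncomputable def subER (R : Submodule ℂ (E ⊗[ℂ] (E ⊗[ℂ] E))) :
    Submodule ℂ (E ⊗[ℂ] (E ⊗[ℂ] (E ⊗[ℂ] E))) :=
  LinearMap.range (R.subtype.lTensor E)

end Embeddings

open LinearMap

namespace Parafermionic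

section Projector

variable {R M : Type*} [CommRing R] [AddCommGroup M] [Module R M]

theorem isProj_inf_range {A B P : Module.End R M} {c : R}
    (hA : A * A = c • A) (hB : B * B = c • B)
    (hPA : ∃ a, P = A * a) (hPB : ∃ b, P = B * b)
    (hP : ∃ u v, P + u * (c • 1 - A) + v * (c • 1 - B) = 1) :
    IsProj (range A ⊓ range B) P := by
  obtain ⟨a, rfl⟩ := hPA
  obtain ⟨b, hb⟩ := hPB
  obtain ⟨u, v, huv⟩ := hP
  have eigen {T : Module.End R M} (hT : T * T = c • T) {x : M} (hx : x ∈ range T) :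
      (c • 1 - T) x = 0 := by
    obtain ⟨y, rfl⟩ := hx
    have hy := congr($hT y)
    simp only [Module.End.mul_apply, LinearMap.smul_apply] at hy
    simp [hy]
  refine ⟨fun x => ⟨mem_range_self _ (a x), hb ▸ mem_range_self _ (b x)⟩, ?_⟩
  rintro x ⟨hxA, hxB⟩
  have := congr($huv x)
  simpa [Module.End.mul_apply, eigen hA hxA, eigen hB hxB] using this

end Projector

variable (E : Type*) [AddCommGroup E] [Module ℂ E]

noncomputable def tripleBracket : Module.End ℂ (E ⊗[ℂ] (E ⊗[ℂ] E)) :=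
  let swap : Module.End ℂ (E ⊗[ℂ] (E ⊗[ℂ] E)) := (TensorProduct.leftComm ℂ E E E).toLinearMap
  let cycle := swap * lTensor E (TensorProduct.comm ℂ E E).toLinearMap
  (1 - cycle) * (1 - swap)

noncomputable def bracketLeft : Module.End ℂ (E ⊗[ℂ] (E ⊗[ℂ] (E ⊗[ℂ] E))) :=
  (assocFour E).conj (rTensor E (tripleBracket E))

noncomputable def bracketRight : Module.End ℂ (E ⊗[ℂ] (E ⊗[ℂ] (E ⊗[ℂ] E))) :=
  lTensor E (tripleBracket E)

noncomputable def swap12 : Module.End ℂ (E ⊗[ℂ] (E ⊗[ℂ] (E ⊗[ℂ] E))) :=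
  (TensorProduct.leftComm ℂ E E (E ⊗[ℂ] E)).toLinearMap

noncomputable def swap23 : Module.End ℂ (E ⊗[ℂ] (E ⊗[ℂ] (E ⊗[ℂ] E))) :=
  lTensor E (TensorProduct.leftComm ℂ E E E).toLinearMap

noncomputable def swap34 : Module.End ℂ (E ⊗[ℂ] (E ⊗[ℂ] (E ⊗[ℂ] E))) :=
  lTensor E (lTensor E (TensorProduct.comm ℂ E E).toLinearMap)

local notation "σ₁" => swap12 _
local notation "σ₂" => swap23 _
local notation "σ₃" => swap34 _

/-- `1/12` times the Young symmetrizer of the tableau with rows `{1,3}, {2,4}` and columns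
`{1,4}, {2,3}`; `12` is the hook-length product of the shape `(2,2)`. -/
noncomputable def youngProj : Module.End ℂ (E ⊗[ℂ] (E ⊗[ℂ] (E ⊗[ℂ] E))) :=
  (12 : ℂ)⁻¹ • ((1 + σ₁ * σ₂ * σ₁) * (1 + σ₂ * σ₃ * σ₂) *
    (1 - σ₁ * σ₂ * σ₃ * σ₂ * σ₁) * (1 - σ₂))

variable {E}

@[simp] lemma tripleBracket_tmul (x y z : E) :
    tripleBracket E (x ⊗ₜ (y ⊗ₜ z)) =
      x ⊗ₜ (y ⊗ₜ z) - y ⊗ₜ (x ⊗ₜ z) - z ⊗ₜ (x ⊗ₜ y) + z ⊗ₜ (y ⊗ₜ x) := by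
  simp only [tripleBracket, Module.End.mul_apply, LinearMap.sub_apply, Module.End.one_apply,
    LinearEquiv.coe_coe, leftComm_tmul, map_sub, lTensor_tmul, comm_tmul]
  abel

@[simp] lemma bracketLeft_tmul (x y z w : E) :
    bracketLeft E (x ⊗ₜ (y ⊗ₜ (z ⊗ₜ w))) =
      x ⊗ₜ (y ⊗ₜ (z ⊗ₜ w)) - y ⊗ₜ (x ⊗ₜ (z ⊗ₜ w))
        - z ⊗ₜ (x ⊗ₜ (y ⊗ₜ w)) + z ⊗ₜ (y ⊗ₜ (x ⊗ₜ w)) := by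
  simp [bracketLeft, sub_tmul, add_tmul, assocFour]

@[simp] lemma bracketRight_tmul (x y z w : E) :
    bracketRight E (x ⊗ₜ (y ⊗ₜ (z ⊗ₜ w))) =
      x ⊗ₜ (y ⊗ₜ (z ⊗ₜ w)) - x ⊗ₜ (z ⊗ₜ (y ⊗ₜ w))
        - x ⊗ₜ (w ⊗ₜ (y ⊗ₜ z)) + x ⊗ₜ (w ⊗ₜ (z ⊗ₜ y)) := by
  simp [bracketRight, tmul_sub, tmul_add]

@[simp] lemma swap12_tmul (x y z w : E) :
    swap12 E (x ⊗ₜ (y ⊗ₜ (z ⊗ₜ w))) = y ⊗ₜ (x ⊗ₜ (z ⊗ₜ w)) := rfl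

@[simp] lemma swap23_tmul (x y z w : E) :
    swap23 E (x ⊗ₜ (y ⊗ₜ (z ⊗ₜ w))) = x ⊗ₜ (z ⊗ₜ (y ⊗ₜ w)) := rfl

@[simp] lemma swap34_tmul (x y z w : E) :
    swap34 E (x ⊗ₜ (y ⊗ₜ (z ⊗ₜ w))) = x ⊗ₜ (y ⊗ₜ (w ⊗ₜ z)) := rfl

lemma youngProj_tmul (x y z w : E) :
    youngProj E (x ⊗ₜ (y ⊗ₜ (z ⊗ₜ w))) = (12 : ℂ)⁻¹ •
      (x ⊗ₜ (y ⊗ₜ (z ⊗ₜ w)) - x ⊗ₜ (z ⊗ₜ (y ⊗ₜ w)) - x ⊗ₜ (w ⊗ₜ (y ⊗ₜ z))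
        + x ⊗ₜ (w ⊗ₜ (z ⊗ₜ y)) + y ⊗ₜ (x ⊗ₜ (w ⊗ₜ z)) + w ⊗ₜ (x ⊗ₜ (y ⊗ₜ z))
        - z ⊗ₜ (x ⊗ₜ (w ⊗ₜ y)) - w ⊗ₜ (x ⊗ₜ (z ⊗ₜ y)) - y ⊗ₜ (z ⊗ₜ (x ⊗ₜ w))
        - y ⊗ₜ (w ⊗ₜ (x ⊗ₜ z)) + z ⊗ₜ (y ⊗ₜ (x ⊗ₜ w)) + z ⊗ₜ (w ⊗ₜ (x ⊗ₜ y))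
        + y ⊗ₜ (z ⊗ₜ (w ⊗ₜ x)) - z ⊗ₜ (y ⊗ₜ (w ⊗ₜ x)) - w ⊗ₜ (y ⊗ₜ (z ⊗ₜ x))
        + w ⊗ₜ (z ⊗ₜ (y ⊗ₜ x))) := by
  simp only [youngProj, LinearMap.smul_apply, Module.End.mul_apply, LinearMap.sub_apply,
    LinearMap.add_apply, Module.End.one_apply, swap12_tmul, swap23_tmul, swap34_tmul, map_sub,
    map_add, smul_add]
  module

lemma range_tripleBracket :
    range (tripleBracket E) = Submodule.span ℂ {t | ∃ x y z : E,
      t = x ⊗ₜ (y ⊗ₜ z) - y ⊗ₜ (x ⊗ₜ z) - z ⊗ₜ (x ⊗ₜ y) + z ⊗ₜ (y ⊗ₜ x)} := by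
  apply le_antisymm
  · rintro _ ⟨t, rfl⟩
    induction t using TensorProduct.induction_on with
    | zero => simp
    | tmul x m =>
      induction m using TensorProduct.induction_on with
      | zero => simp
      | tmul y z => exact Submodule.subset_span ⟨x, y, z, tripleBracket_tmul x y z⟩
      | add m₁ m₂ h₁ h₂ => rw [tmul_add, map_add]; exact add_mem h₁ h₂
    | add t₁ t₂ h₁ h₂ => rw [map_add]; exact add_mem h₁ h₂
  · rw [Submodule.span_le]
    rintro _ ⟨x, y, z, rfl⟩
    exact ⟨x ⊗ₜ (y ⊗ₜ z), tripleBracket_tmul x y z⟩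

lemma subRE_range (f : Module.End ℂ (E ⊗[ℂ] (E ⊗[ℂ] E))) :
    subRE (range f) = range ((assocFour E).conj (rTensor E f)) := by
  rw [subRE, ← rTensor_def, ← rTensor_range, LinearEquiv.conj_apply, range_comp_of_range_eq_top,
    range_comp]
  exact range_eq_top.mpr (assocFour E).symm.surjective

lemma subER_range (f : Module.End ℂ (E ⊗[ℂ] (E ⊗[ℂ] E))) :
    subER (range f) = range (lTensor E f) :=
  (lTensor_range (g := f) E).symm

lemma tripleBracket_mul_self : tripleBracket E * tripleBracket E = (3 : ℂ) • tripleBracket E := by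
  ext x y z
  simp only [AlgebraTensorModule.curry_apply, restrictScalars_self, curry_apply,
    Module.End.mul_apply, tripleBracket_tmul, map_add, map_sub, LinearMap.smul_apply, smul_add]
  module

lemma bracketLeft_mul_self : bracketLeft E * bracketLeft E = (3 : ℂ) • bracketLeft E := by
  rw [bracketLeft, Module.End.mul_eq_comp, ← LinearEquiv.conj_comp, ← Module.End.mul_eq_comp,
    ← rTensor_mul, tripleBracket_mul_self, rTensor_smul, map_smul]

lemma bracketRight_mul_self : bracketRight E * bracketRight E = (3 : ℂ) • bracketRight E := by
  rw [bracketRight, ← lTensor_mul, tripleBracket_mul_self, lTensor_smul]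

lemma exists_youngProj_eq_bracketLeft_mul :
    ∃ a, youngProj E = bracketLeft E * a :=
  ⟨(12 : ℂ)⁻¹ • (1 - σ₂ - σ₂ * σ₃ + σ₂ * σ₃ * σ₂ + σ₃ * σ₂ * σ₁), by
    ext x y z w
    simp only [AlgebraTensorModule.curry_apply, restrictScalars_self, curry_apply, youngProj_tmul,
      smul_add, Module.End.mul_apply, LinearMap.add_apply, LinearMap.smul_apply, LinearMap.sub_apply,
      Module.End.one_apply, swap12_tmul, swap23_tmul, swap34_tmul, map_add, map_smul, map_sub,
      bracketLeft_tmul]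
    module⟩

lemma exists_youngProj_eq_bracketRight_mul :
    ∃ b, youngProj E = bracketRight E * b :=
  ⟨(12 : ℂ)⁻¹ • (1 + σ₃ * σ₁ + σ₁ * σ₂ * σ₃ - σ₃ * σ₁ * σ₂ - σ₁ * σ₂ * σ₃ * σ₂), by
    ext x y z w
    simp only [AlgebraTensorModule.curry_apply, restrictScalars_self, curry_apply, youngProj_tmul,
      smul_add, Algebra.mul_smul_comm, LinearMap.smul_apply, Module.End.mul_apply,
      LinearMap.sub_apply, LinearMap.add_apply, Module.End.one_apply, swap12_tmul, swap23_tmul,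
      swap34_tmul, map_sub, map_add, bracketRight_tmul]
    module⟩

/-- `u` and `v` were found by solving the linear system in the group algebra `ℚ[S₄]` to which
this identity amounts. -/
lemma exists_youngProj_add_mul_add_mul_eq_one : ∃ u v,
    youngProj E + u * ((3 : ℂ) • 1 - bracketLeft E) + v * ((3 : ℂ) • 1 - bracketRight E) = 1 :=
  ⟨(36 : ℂ)⁻¹ • (6 - 6 * σ₃ + 3 * σ₂ + σ₂ * σ₃ - 6 * σ₃ * σ₂ + 2 * σ₂ * σ₃ * σ₂
      + 4 * σ₁ * σ₂ * σ₃ + 3 * σ₃ * σ₁ * σ₂ + 2 * σ₁ * σ₂ * σ₃ * σ₂ + σ₂ * σ₃ * σ₁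
      - 2 * σ₁ * σ₂ * σ₃ * σ₁ - σ₂ * σ₃ * σ₁ * σ₂ - σ₁ * σ₂ * σ₃ * σ₁ * σ₂),
    (12 : ℂ)⁻¹ • (5 + 3 * σ₃ - 3 * σ₂ - σ₂ * σ₃ - σ₁ - σ₁ * σ₂ * σ₃), by
    ext x y z w
    simp only [Algebra.smul_mul_assoc, AlgebraTensorModule.curry_apply, restrictScalars_self,
      curry_apply, LinearMap.add_apply, youngProj_tmul, smul_add, LinearMap.smul_apply,
      Module.End.mul_apply, LinearMap.sub_apply, Module.End.one_apply, Module.End.ofNat_apply,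
      bracketLeft_tmul, bracketRight_tmul, swap12_tmul, swap23_tmul, swap34_tmul, map_sub, map_smul,
      map_add]
    module⟩

lemma isProj_youngProj :
    IsProj (range (bracketLeft E) ⊓ range (bracketRight E)) (youngProj E) :=
  isProj_inf_range bracketLeft_mul_self bracketRight_mul_self exists_youngProj_eq_bracketLeft_mul
    exists_youngProj_eq_bracketRight_mul exists_youngProj_add_mul_add_mul_eq_one

lemma trace_youngProj {ι : Type*} [Fintype ι] (b : Module.Basis ι ℂ E) :
    trace ℂ _ (youngProj E) = ((Fintype.card ι : ℂ) ^ 4 - (Fintype.card ι : ℂ) ^ 2) / 12 := by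
  classical
  rw [trace_eq_matrix_trace ℂ (b.tensorProduct (b.tensorProduct (b.tensorProduct b))),
    Matrix.trace]
  simp only [Fintype.sum_prod_type, Matrix.diag, toMatrix_apply,
    Module.Basis.tensorProduct_apply, youngProj_tmul, map_smul, map_add, map_sub,
    Finsupp.smul_apply, Finsupp.add_apply, Finsupp.sub_apply, smul_eq_mul, ← Finset.mul_sum,
    Finset.sum_add_distrib, Finset.sum_sub_distrib]
  simp only [Module.Basis.tensorProduct_repr_tmul_apply, Module.Basis.repr_self,
    Finsupp.single_eq_same, smul_eq_mul, mul_one, Finset.sum_const, Finset.card_univ, nsmul_eq_mul,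
    Finsupp.single_apply, mul_ite, mul_zero, Finset.sum_ite_irrel,
    Finset.sum_ite_eq', Finset.mem_univ, ↓reduceIte, Finset.sum_ite_eq, add_sub_cancel_right]
  ring

theorem finrank_subRE_inf_subER_range_tripleBracket [FiniteDimensional ℂ E] :
    Module.finrank ℂ ↥(subRE (range (tripleBracket E)) ⊓ subER (range (tripleBracket E))) =
      Module.finrank ℂ E ^ 2 * (Module.finrank ℂ E ^ 2 - 1) / 12 := by
  set n := Module.finrank ℂ E
  set V := subRE (range (tripleBracket E)) ⊓ subER (range (tripleBracket E))
  have hproj : IsProj V (youngProj E) := by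
    simp only [V, subRE_range, subER_range]
    exact isProj_youngProj
  have htrace := hproj.trace
  rw [trace_youngProj (Module.finBasis ℂ E), Fintype.card_fin] at htrace
  have h12 : 12 * Module.finrank ℂ V = n ^ 2 * n ^ 2 - n ^ 2 := by
    apply Nat.cast_injective (R := ℂ)
    push_cast [Nat.cast_sub (Nat.le_mul_self _), ← htrace]
    ring
  rw [Nat.mul_sub_one, ← h12, Nat.mul_div_cancel_left _ (by norm_num)]

end Parafermionic

open Parafermionic in
theorem finrank_parafermionic_dual_degree_four_general (D : ℕ) :
    Module.finrank ℂ
        ↥(subRE (parafermionicRelations D) ⊓ subER (parafermionicRelations D)) =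
      D ^ 2 * (D ^ 2 - 1) / 12 := by
  rw [parafermionicRelations, ← range_tripleBracket, finrank_subRE_inf_subER_range_tripleBracket,
    Module.finrank_fin_fun]

/-- The subspace `(R_B⊗E) ∩ (E⊗R_B)` of `(ℂ^D)^{⊗4}` — the dual of the degree-4 component of
the dual cubic algebra `B^!` of the parafermionic algebra — has dimension `D²(D²-1)/12`. -/
theorem finrank_parafermionic_dual_degree_four (D : ℕ) (hD : 1 ≤ D) :
    Module.finrank ℂ
        ↥(subRE (parafermionicRelations D) ⊓ subER (parafermionicRelations D)) =
      D ^ 2 * (D ^ 2 - 1) / 12 :=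
  finrank_parafermionic_dual_degree_four_general D
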